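/- arXiv:2605.28377 — 5 statements merged into one kernel-verified Lean document; each statement's English description precedes it below -/
import Mathlib

section
/- Let r ≥ 1 be an integer and let a_1, …, a_r be pairwise distinct nonnegative real numbers. Then the sum over all ordered pairs (i,j) with 1 ≤ i, j ≤ r and i ≠ j of tanh(a_i)·(coth(a_i − a_j) + coth(a_i + a_j)) equals r(r−1). -/
noncomputable def coth (x : ℝ) : ℝ := Real.cosh x / Real.sinh x

/-!
The terms for `(i, j)` and `(j, i)` add up to `2`: by oddness of `coth` their sum is
`(tanh x - tanh y) coth (x - y) + (tanh x + tanh y) coth (x + y)`, and since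
`tanh x ± tanh y = sinh (x ± y) / (cosh x cosh y)` this equals
`(cosh (x - y) + cosh (x + y)) / (cosh x cosh y) = 2`. There are `r (r - 1) / 2` such pairs.
-/

open Finset Real

lemma sum_sum_ne_swap {ι M : Type*} [Fintype ι] [DecidableEq ι] [AddCommMonoid M]
    (F : ι → ι → M) :
    ∑ i, ∑ j ∈ univ.filter (· ≠ i), F j i = ∑ i, ∑ j ∈ univ.filter (· ≠ i), F i j :=
  Finset.sum_comm' fun _ _ => by simp [ne_comm]

lemma two_mul_sum_sum_ne_of_add_swap {ι R : Type*} [Fintype ι] [DecidableEq ι] [CommRing R]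
    (F : ι → ι → R) (c : R) (hF : ∀ i j, i ≠ j → F i j + F j i = c) :
    2 * ∑ i, ∑ j ∈ univ.filter (· ≠ i), F i j = Fintype.card ι * (Fintype.card ι - 1) * c := by
  calc 2 * ∑ i, ∑ j ∈ univ.filter (· ≠ i), F i j
      = ∑ i, ∑ j ∈ univ.filter (· ≠ i), (F i j + F j i) := by
        rw [two_mul]; nth_rw 2 [← sum_sum_ne_swap]; simp only [sum_add_distrib]
    _ = ∑ i : ι, ∑ j ∈ univ.filter (· ≠ i), c :=
        sum_congr rfl fun i _ => sum_congr rfl fun j hj => hF i j (mem_filter.mp hj).2.symm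
    _ = Fintype.card ι * (Fintype.card ι - 1) * c := by
        simp only [sum_const, filter_ne', cast_card_erase_of_mem (mem_univ _), card_univ,
          nsmul_eq_mul]
        ring

lemma tanh_sub_tanh (x y : ℝ) : tanh x - tanh y = sinh (x - y) / (cosh x * cosh y) := by
  rw [tanh_eq_sinh_div_cosh, tanh_eq_sinh_div_cosh, sinh_sub,
    div_sub_div _ _ (cosh_pos x).ne' (cosh_pos y).ne']

lemma tanh_add_tanh (x y : ℝ) : tanh x + tanh y = sinh (x + y) / (cosh x * cosh y) := by
  rw [tanh_eq_sinh_div_cosh, tanh_eq_sinh_div_cosh, sinh_add,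
    div_add_div _ _ (cosh_pos x).ne' (cosh_pos y).ne']

lemma div_mul_coth {z : ℝ} (hz : z ≠ 0) (c : ℝ) : sinh z / c * coth z = cosh z / c := by
  rw [coth]; field_simp [sinh_ne_zero.mpr hz]

lemma tanh_mul_coth_add_swap {x y : ℝ} (hxy : x ≠ y) (hxy' : x + y ≠ 0) :
    tanh x * (coth (x - y) + coth (x + y)) + tanh y * (coth (y - x) + coth (y + x)) = 2 := by
  have hodd : coth (y - x) = -coth (x - y) := by
    rw [coth, coth, ← neg_sub, sinh_neg, cosh_neg, div_neg]
  calc tanh x * (coth (x - y) + coth (x + y)) + tanh y * (coth (y - x) + coth (y + x))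
      = (tanh x - tanh y) * coth (x - y) + (tanh x + tanh y) * coth (x + y) := by
        rw [hodd, add_comm y]; ring
    _ = (cosh (x - y) + cosh (x + y)) / (cosh x * cosh y) := by
        rw [tanh_sub_tanh, tanh_add_tanh, div_mul_coth (sub_ne_zero.mpr hxy), div_mul_coth hxy',
          add_div]
    _ = 2 := by
        rw [cosh_sub, cosh_add, div_eq_iff (mul_pos (cosh_pos x) (cosh_pos y)).ne']; ring

theorem sum_tanh_coth_pairs_general (r : ℕ) (a : Fin r → ℝ)
    (ha : ∀ i, 0 ≤ a i) (hinj : Function.Injective a) :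
    ∑ i : Fin r, ∑ j ∈ Finset.univ.filter (fun j => j ≠ i),
      Real.tanh (a i) * (coth (a i - a j) + coth (a i + a j))
      = (r : ℝ) * ((r : ℝ) - 1) := by
  have hpair : ∀ i j, i ≠ j →
      tanh (a i) * (coth (a i - a j) + coth (a i + a j))
        + tanh (a j) * (coth (a j - a i) + coth (a j + a i)) = 2 := by
    intro i j hij
    have hne : a i ≠ a j := hinj.ne hij
    refine tanh_mul_coth_add_swap hne fun hsum => hne ?_
    obtain ⟨hi, hj⟩ := (add_eq_zero_iff_of_nonneg (ha i) (ha j)).mp hsum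
    rw [hi, hj]
  have h := two_mul_sum_sum_ne_of_add_swap _ 2 hpair
  rw [Fintype.card_fin] at h
  linarith

theorem sum_tanh_coth_pairs (r : ℕ) (hr : 1 ≤ r) (a : Fin r → ℝ)
    (ha : ∀ i, 0 ≤ a i) (hinj : Function.Injective a) :
    ∑ i : Fin r, ∑ j ∈ Finset.univ.filter (fun j => j ≠ i),
      Real.tanh (a i) * (coth (a i - a j) + coth (a i + a j))
      = (r : ℝ) * ((r : ℝ) - 1) :=
  sum_tanh_coth_pairs_general r a ha hinj
end

section
/- Let r ≥ 1 be an integer and let a_1, …, a_r be pairwise distinct positive real numbers. Then the sum over all ordered pairs (i,j) with 1 ≤ i, j ≤ r and i ≠ j of coth(2a_i)·(coth(a_i − a_j) + coth(a_i + a_j)) equals r(r−1). -/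
lemma coth_pair_key (x y : ℝ) (hx : 0 < x) (hy : 0 < y) (hxy : x ≠ y) :
    coth (2*x)*(coth (x-y)+coth (x+y)) + coth (2*y)*(coth (y-x)+coth (y+x)) = 2 := by
  have h1 : Real.sinh (2*x) ≠ 0 := by rw [Real.sinh_ne_zero]; positivity
  have h2 : Real.sinh (2*y) ≠ 0 := by rw [Real.sinh_ne_zero]; positivity
  have h3 : Real.sinh (x - y) ≠ 0 := by
    rw [Real.sinh_ne_zero]; intro h; exact hxy (by linarith)
  have h4 : Real.sinh (y - x) ≠ 0 := by
    rw [Real.sinh_ne_zero]; intro h; exact hxy (by linarith)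
  have h5 : Real.sinh (x + y) ≠ 0 := by rw [Real.sinh_ne_zero]; positivity
  have h6 : Real.sinh (y + x) ≠ 0 := by rw [add_comm]; exact h5
  have px := Real.cosh_sq x
  have py := Real.cosh_sq y
  unfold coth
  rw [Real.sinh_two_mul, Real.cosh_two_mul, Real.sinh_two_mul y, Real.cosh_two_mul y,
    Real.sinh_sub, Real.cosh_sub, Real.sinh_sub y, Real.cosh_sub y,
    Real.sinh_add, Real.cosh_add, Real.sinh_add y, Real.cosh_add y] at *
  have hcx : Real.cosh x ≠ 0 := (Real.cosh_pos x).ne'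
  have hcy : Real.cosh y ≠ 0 := (Real.cosh_pos y).ne'
  have h7 : Real.cosh x * Real.sinh y - Real.sinh x * Real.cosh y ≠ 0 := by
    intro h; apply h3; linarith
  field_simp
  ring_nf

theorem sum_coth_two_coth_pairs (r : ℕ) (hr : 1 ≤ r) (a : Fin r → ℝ)
    (ha : ∀ i, 0 < a i) (hinj : Function.Injective a) :
    ∑ i : Fin r, ∑ j ∈ Finset.univ.filter (fun j => j ≠ i),
      coth (2 * a i) * (coth (a i - a j) + coth (a i + a j))
      = (r : ℝ) * ((r : ℝ) - 1) := by
  set f : Fin r → Fin r → ℝ := fun i j =>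
    coth (2 * a i) * (coth (a i - a j) + coth (a i + a j)) with hf
  have hswap : ∑ i : Fin r, ∑ j ∈ Finset.univ.filter (fun j => j ≠ i), f i j
      = ∑ i : Fin r, ∑ j ∈ Finset.univ.filter (fun j => j ≠ i), f j i := by
    rw [Finset.sum_comm' (s' := fun j => Finset.univ.filter (fun i => i ≠ j))
      (t' := Finset.univ)]
    intro i j
    simp [ne_comm, eq_comm]
  have hkey : ∀ i j : Fin r, j ≠ i → f i j + f j i = 2 := by
    intro i j hij
    have : a i ≠ a j := fun h => hij.symm (hinj h)
    exact coth_pair_key (a i) (a j) (ha i) (ha j) this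
  have hcard : ∀ i : Fin r, (Finset.univ.filter (fun j => j ≠ i)).card = r - 1 := by
    intro i
    rw [Finset.filter_ne', Finset.card_erase_of_mem (Finset.mem_univ i), Finset.card_univ,
      Fintype.card_fin]
  have h2 : (∑ i : Fin r, ∑ j ∈ Finset.univ.filter (fun j => j ≠ i), f i j)
      + (∑ i : Fin r, ∑ j ∈ Finset.univ.filter (fun j => j ≠ i), f i j)
      = 2 * ((r : ℝ) * ((r : ℝ) - 1)) := by
    nth_rewrite 2 [hswap]
    rw [← Finset.sum_add_distrib]
    have : ∀ i : Fin r, (∑ j ∈ Finset.univ.filter (fun j => j ≠ i), f i j)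
        + (∑ j ∈ Finset.univ.filter (fun j => j ≠ i), f j i)
        = ((r : ℝ) - 1) * 2 := by
      intro i
      rw [← Finset.sum_add_distrib]
      rw [Finset.sum_congr rfl (fun j hj => hkey i j (Finset.mem_filter.mp hj).2)]
      rw [Finset.sum_const, hcard i, nsmul_eq_mul, Nat.cast_sub hr]
      push_cast; ring
    rw [Finset.sum_congr rfl (fun i _ => this i), Finset.sum_const, Finset.card_univ,
      Fintype.card_fin, nsmul_eq_mul]
    ring
  linarith
end

section
/- Let r ≥ 1 be an integer, let a, b be real numbers, set γ = (r−1)·a + b + 2, and let τ_1 > τ_2 > … > τ_r > 0 be real numbers. Then the following change-of-variables (Jacobian) identity holds: (∏_{j=1}^r (1 − tanh(τ_j)²)^(−γ) · (tanh(τ_j)²)^b) · (∏_{1 ≤ i < j ≤ r} (tanh(τ_i)² − tanh(τ_j)²)^a) · (∏_{j=1}^r 2·tanh(τ_j)·(1 − tanh(τ_j)²)) = (∏_{j=1}^r sinh(2τ_j)·(sinh τ_j)^(2b)) · (∏_{1 ≤ i < j ≤ r} (sinh(τ_i − τ_j)·sinh(τ_i + τ_j))^a). -/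
open Finset

private lemma prod_pairs {M : Type*} [CommMonoid M] (r : ℕ) (g : Fin r → M) :
    ∏ p ∈ Finset.univ.filter (fun p : Fin r × Fin r => p.1 < p.2), (g p.1 * g p.2)
      = ∏ j, g j ^ (r - 1) := by
  rw [Finset.prod_filter, Fintype.prod_prod_type]
  have h1 : ∀ i : Fin r, (∏ j, if i < j then g i * g j else 1)
      = g i ^ (Finset.Ioi i).card * ∏ j ∈ Finset.Ioi i, g j := by
    intro i
    rw [← Finset.prod_filter]
    rw [show (Finset.univ.filter (fun j => i < j)) = Finset.Ioi i from Finset.filter_lt_eq_Ioi]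
    rw [Finset.prod_mul_distrib, Finset.prod_const]
  simp_rw [h1]
  rw [Finset.prod_mul_distrib]
  have h2 : (∏ i : Fin r, ∏ j ∈ Finset.Ioi i, g j) = ∏ j : Fin r, g j ^ (Finset.Iio j).card := by
    rw [Finset.prod_comm' (t' := Finset.univ) (s' := fun j => Finset.Iio j)
      (by intro x y; simp [Finset.mem_Ioi, Finset.mem_Iio])]
    simp [Finset.prod_const]
  rw [h2, ← Finset.prod_mul_distrib]
  refine Finset.prod_congr rfl fun j _ => ?_
  rw [Fin.card_Ioi, Fin.card_Iio, ← pow_add]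
  congr 1
  omega

private lemma sinh_pos' {t : ℝ} (h : 0 < t) : 0 < Real.sinh t := by
  have := Real.sinh_lt_sinh.2 h
  simpa using this

private lemma perj (a b e : ℝ) (x : ℝ) (hx : 0 < x) :
    (1 - Real.tanh x ^ 2) ^ (-(e * a + b + 2)) * (Real.tanh x ^ 2) ^ b *
      (2 * Real.tanh x * (1 - Real.tanh x ^ 2)) * (Real.cosh x ^ 2) ^ (-(a * e))
    = Real.sinh (2 * x) * Real.sinh x ^ (2 * b) := by
  have hc : 0 < Real.cosh x := Real.cosh_pos x
  have hs : 0 < Real.sinh x := sinh_pos' hx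
  have hid := Real.cosh_sq_sub_sinh_sq x
  have e1 : 1 - Real.tanh x ^ 2 = Real.cosh x ^ (-2 : ℝ) := by
    rw [Real.rpow_neg hc.le, show ((2:ℝ)) = ((2:ℕ):ℝ) by norm_num, Real.rpow_natCast,
      Real.tanh_eq_sinh_div_cosh]
    field_simp
    exact hid
  have e2 : Real.tanh x = Real.sinh x ^ (1:ℝ) * Real.cosh x ^ (-1 : ℝ) := by
    rw [Real.tanh_eq_sinh_div_cosh, Real.rpow_one, Real.rpow_neg hc.le, Real.rpow_one]
    ring
  have e3 : Real.cosh x ^ 2 = Real.cosh x ^ (2:ℝ) := by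
    rw [show ((2:ℝ)) = ((2:ℕ):ℝ) by norm_num, Real.rpow_natCast]
  have e4 : Real.sinh (2*x) = 2 * (Real.sinh x ^ (1:ℝ) * Real.cosh x ^ (1:ℝ)) := by
    rw [Real.sinh_two_mul, Real.rpow_one, Real.rpow_one]; ring
  rw [e1, e2, e3, e4]
  rw [← Real.rpow_natCast (Real.sinh x ^ (1:ℝ) * Real.cosh x ^ (-1:ℝ)) 2]
  rw [Real.mul_rpow (by positivity) (by positivity), Real.mul_rpow (by positivity) (by positivity)]
  rw [← Real.rpow_mul hc.le, ← Real.rpow_mul hc.le, ← Real.rpow_mul hc.le,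
      ← Real.rpow_mul hs.le, ← Real.rpow_mul hs.le, ← Real.rpow_mul hc.le]
  push_cast
  have n1 : ∀ p:ℝ, Real.cosh x ^ p ≠ 0 := fun p => (Real.rpow_pos_of_pos hc p).ne'
  have n2 : ∀ p:ℝ, Real.sinh x ^ p ≠ 0 := fun p => (Real.rpow_pos_of_pos hs p).ne'
  refine Real.log_injOn_pos (Set.mem_Ioi.2 (by positivity)) (Set.mem_Ioi.2 (by positivity)) ?_
  simp only [ne_eq, Real.log_mul, mul_ne_zero_iff, n1, n2, two_ne_zero, not_false_eq_true,
    OfNat.ofNat_ne_zero, Real.log_rpow hc, Real.log_rpow hs, and_self]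
  ring

private lemma pairfact (a u v : ℝ) (hv : 0 < v) (huv : v < u) :
    (Real.tanh u ^ 2 - Real.tanh v ^ 2) ^ a
      = (Real.sinh (u - v) * Real.sinh (u + v)) ^ a *
        ((Real.cosh u ^ 2) ^ (-a) * (Real.cosh v ^ 2) ^ (-a)) := by
  have hcu : 0 < Real.cosh u := Real.cosh_pos u
  have hcv : 0 < Real.cosh v := Real.cosh_pos v
  have hs1 : 0 < Real.sinh (u - v) := sinh_pos' (by linarith)
  have hs2 : 0 < Real.sinh (u + v) := sinh_pos' (by linarith)
  have key : Real.tanh u ^ 2 - Real.tanh v ^ 2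
      = (Real.sinh (u - v) * Real.sinh (u + v)) * ((Real.cosh u ^ 2)⁻¹ * (Real.cosh v ^ 2)⁻¹) := by
    rw [Real.sinh_sub, Real.sinh_add, Real.tanh_eq_sinh_div_cosh, Real.tanh_eq_sinh_div_cosh]
    field_simp
    ring
  rw [key, Real.mul_rpow (by positivity) (by positivity),
    Real.mul_rpow (by positivity) (by positivity),
    Real.mul_rpow (by positivity) (by positivity),
    Real.inv_rpow (by positivity), Real.inv_rpow (by positivity),
    ← Real.rpow_neg (by positivity), ← Real.rpow_neg (by positivity)]

theorem selberg_jacobian_identity (r : ℕ) (hr : 1 ≤ r) (a b : ℝ) (τ : Fin r → ℝ)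
    (hpos : ∀ i, 0 < τ i) (hmono : ∀ i j : Fin r, i < j → τ j < τ i) :
    (∏ j : Fin r, (1 - Real.tanh (τ j) ^ 2) ^ (-(((r : ℝ) - 1) * a + b + 2)) *
        (Real.tanh (τ j) ^ 2) ^ b) *
      (∏ p ∈ Finset.univ.filter (fun p : Fin r × Fin r => p.1 < p.2),
        (Real.tanh (τ p.1) ^ 2 - Real.tanh (τ p.2) ^ 2) ^ a) *
      (∏ j : Fin r, 2 * Real.tanh (τ j) * (1 - Real.tanh (τ j) ^ 2))
    = (∏ j : Fin r, Real.sinh (2 * τ j) * Real.sinh (τ j) ^ (2 * b)) *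
      (∏ p ∈ Finset.univ.filter (fun p : Fin r × Fin r => p.1 < p.2),
        (Real.sinh (τ p.1 - τ p.2) * Real.sinh (τ p.1 + τ p.2)) ^ a) := by
  have hpair : ∀ p ∈ Finset.univ.filter (fun p : Fin r × Fin r => p.1 < p.2),
      (Real.tanh (τ p.1) ^ 2 - Real.tanh (τ p.2) ^ 2) ^ a
        = (Real.sinh (τ p.1 - τ p.2) * Real.sinh (τ p.1 + τ p.2)) ^ a *
          ((Real.cosh (τ p.1) ^ 2) ^ (-a) * (Real.cosh (τ p.2) ^ 2) ^ (-a)) := by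
    intro p hp
    simp only [Finset.mem_filter, Finset.mem_univ, true_and] at hp
    exact pairfact a _ _ (hpos p.2) (hmono _ _ hp)
  have hK := prod_pairs r (fun j => (Real.cosh (τ j) ^ 2) ^ (-a))
  have hP : (∏ p ∈ Finset.univ.filter (fun p : Fin r × Fin r => p.1 < p.2),
      (Real.tanh (τ p.1) ^ 2 - Real.tanh (τ p.2) ^ 2) ^ a)
    = (∏ p ∈ Finset.univ.filter (fun p : Fin r × Fin r => p.1 < p.2),
        (Real.sinh (τ p.1 - τ p.2) * Real.sinh (τ p.1 + τ p.2)) ^ a) *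
      ∏ j : Fin r, ((Real.cosh (τ j) ^ 2) ^ (-a)) ^ (r - 1) := by
    rw [Finset.prod_congr rfl hpair, Finset.prod_mul_distrib, hK]
  rw [hP]
  have hG : ∀ j : Fin r, ((Real.cosh (τ j) ^ 2) ^ (-a)) ^ (r - 1)
      = (Real.cosh (τ j) ^ 2) ^ (-(a * ((r:ℝ) - 1))) := by
    intro j
    rw [← Real.rpow_natCast ((Real.cosh (τ j) ^ 2) ^ (-a)) (r-1),
      ← Real.rpow_mul (by positivity)]
    congr 1
    rw [Nat.cast_sub hr]
    push_cast
    ring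
  have step : ∀ j : Fin r,
      ((1 - Real.tanh (τ j) ^ 2) ^ (-(((r : ℝ) - 1) * a + b + 2)) * (Real.tanh (τ j) ^ 2) ^ b) *
        (((Real.cosh (τ j) ^ 2) ^ (-a)) ^ (r - 1)) *
        (2 * Real.tanh (τ j) * (1 - Real.tanh (τ j) ^ 2))
      = Real.sinh (2 * τ j) * Real.sinh (τ j) ^ (2 * b) := by
    intro j
    rw [hG j, mul_right_comm]
    exact perj a b ((r:ℝ) - 1) (τ j) (hpos j)
  calc (∏ j : Fin r, (1 - Real.tanh (τ j) ^ 2) ^ (-(((r : ℝ) - 1) * a + b + 2)) *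
        (Real.tanh (τ j) ^ 2) ^ b) *
      ((∏ p ∈ Finset.univ.filter (fun p : Fin r × Fin r => p.1 < p.2),
        (Real.sinh (τ p.1 - τ p.2) * Real.sinh (τ p.1 + τ p.2)) ^ a) *
        ∏ j : Fin r, ((Real.cosh (τ j) ^ 2) ^ (-a)) ^ (r - 1)) *
      (∏ j : Fin r, 2 * Real.tanh (τ j) * (1 - Real.tanh (τ j) ^ 2))
      = ((∏ j : Fin r, (1 - Real.tanh (τ j) ^ 2) ^ (-(((r : ℝ) - 1) * a + b + 2)) *
          (Real.tanh (τ j) ^ 2) ^ b) *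
        (∏ j : Fin r, ((Real.cosh (τ j) ^ 2) ^ (-a)) ^ (r - 1)) *
        (∏ j : Fin r, 2 * Real.tanh (τ j) * (1 - Real.tanh (τ j) ^ 2))) *
        (∏ p ∈ Finset.univ.filter (fun p : Fin r × Fin r => p.1 < p.2),
          (Real.sinh (τ p.1 - τ p.2) * Real.sinh (τ p.1 + τ p.2)) ^ a) := by ring
    _ = (∏ j : Fin r, Real.sinh (2 * τ j) * Real.sinh (τ j) ^ (2 * b)) *
        (∏ p ∈ Finset.univ.filter (fun p : Fin r × Fin r => p.1 < p.2),
          (Real.sinh (τ p.1 - τ p.2) * Real.sinh (τ p.1 + τ p.2)) ^ a) := by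
        rw [← Finset.prod_mul_distrib, ← Finset.prod_mul_distrib]
        exact congrArg (· * _) (Finset.prod_congr rfl fun j _ => step j)
end

section
/- Let r ≥ 1 be an integer and let k_1, k_2, k_3 be real numbers with k_1 ≥ 1, k_2 ≥ 0 and k_2 + k_3 ≥ 1. For x ∈ ℝ^r with 0 < x_r < x_{r−1} < … < x_1, define μ_i(x) = (k_3/2)·coth(x_i) + k_2·coth(2x_i) + (k_1/2)·∑_{j ≠ i} (coth(x_i − x_j) + coth(x_i + x_j)). Then there exist constants C_0 > 0 and C_1 > 0 (depending only on r, k_1, k_2, k_3) such that for every such x, ∑_{i=1}^r x_i·μ_i(x) ≤ C_0 + C_1·∑_{i=1}^r x_i². -/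
lemma coth_pos {t : ℝ} (ht : 0 < t) : 0 < coth t :=
  div_pos (Real.cosh_pos t) (Real.sinh_pos_iff.mpr ht)

lemma coth_neg' (t : ℝ) : coth (-t) = -coth t := by
  simp [coth, Real.sinh_neg, Real.cosh_neg, neg_div, div_neg]

lemma mul_coth_le {t : ℝ} (ht : 0 < t) : t * coth t ≤ t + 1 := by
  have hs : 0 < Real.sinh t := Real.sinh_pos_iff.mpr ht
  have h1 : Real.cosh t ≤ Real.sinh t + 1 := by
    nlinarith [Real.cosh_sq t, Real.cosh_pos t, hs]
  have h2 : t ≤ Real.sinh t := Real.self_le_sinh_iff.mpr ht.le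
  rw [coth, ← mul_div_assoc, div_le_iff₀ hs]
  nlinarith

lemma mul_coth_nonneg (t : ℝ) : 0 ≤ t * coth t := by
  rcases lt_trichotomy t 0 with h | h | h
  · have : 0 < (-t) * coth (-t) := mul_pos (by linarith) (coth_pos (by linarith))
    rw [coth_neg'] at this; nlinarith
  · simp [h]
  · exact (mul_pos h (coth_pos h)).le

lemma mul_coth_le_abs (s : ℝ) : s * coth s ≤ |s| + 1 := by
  rcases lt_trichotomy s 0 with h | h | h
  · have := mul_coth_le (t := -s) (by linarith)
    rw [coth_neg'] at this
    rw [abs_of_neg h]; nlinarith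
  · simp [h, coth, Real.sinh_zero]
  · rw [abs_of_pos h]; exact mul_coth_le h

set_option maxHeartbeats 1000000 in
theorem heckman_opdam_drift_quadratic_bound (r : ℕ) (hr : 1 ≤ r)
    (k1 k2 k3 : ℝ) (hk1 : 1 ≤ k1) (hk2 : 0 ≤ k2) (hk23 : 1 ≤ k2 + k3) :
    ∃ C0 C1 : ℝ, 0 < C0 ∧ 0 < C1 ∧
      ∀ x : Fin r → ℝ, (∀ i, 0 < x i) → (∀ i j : Fin r, i < j → x j < x i) →
        ∑ i : Fin r, x i *
          (k3 / 2 * coth (x i) + k2 * coth (2 * x i)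
            + k1 / 2 * ∑ j ∈ Finset.univ.filter (fun j => j ≠ i),
                (coth (x i - x j) + coth (x i + x j)))
        ≤ C0 + C1 * ∑ i : Fin r, (x i) ^ 2 := by
  have hrpos : (0 : ℝ) < r := by exact_mod_cast hr
  have hk1pos : (0 : ℝ) < k1 := by linarith
  set C1 : ℝ := |k3| / 2 + k2 + 2 * k1 * r + 1 with hC1
  have hC1pos : 0 < C1 := by positivity
  clear_value C1
  refine ⟨2 * r * C1, C1, by positivity, hC1pos, ?_⟩
  intro x hx hord
  set S1 := ∑ i : Fin r, x i with hS1
  set S2 := ∑ i : Fin r, (x i) ^ 2 with hS2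
  set E := ∑ i : Fin r, ∑ j : Fin r, (x i + x j + 1) with hE
  clear_value S1 S2 E
  -- split the sum into four pieces
  have key : ∑ i : Fin r, x i *
          (k3 / 2 * coth (x i) + k2 * coth (2 * x i)
            + k1 / 2 * ∑ j ∈ Finset.univ.filter (fun j => j ≠ i),
                (coth (x i - x j) + coth (x i + x j)))
      = (∑ i : Fin r, k3 / 2 * (x i * coth (x i)))
        + (∑ i : Fin r, k2 * (x i * coth (2 * x i)))
        + (∑ i : Fin r, k1 / 2 * (∑ j ∈ Finset.univ.filter (fun j => j ≠ i),
            x i * coth (x i - x j)))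
        + (∑ i : Fin r, k1 / 2 * (∑ j ∈ Finset.univ.filter (fun j => j ≠ i),
            x i * coth (x i + x j))) := by
    rw [← Finset.sum_add_distrib, ← Finset.sum_add_distrib, ← Finset.sum_add_distrib]
    refine Finset.sum_congr rfl fun i _ => ?_
    rw [Finset.sum_add_distrib]
    ring_nf
    congr 2
    · congr 1
      rw [mul_comm (x i) k1, mul_assoc, Finset.mul_sum]
    · rw [mul_comm (x i) k1, mul_assoc, Finset.mul_sum]
  rw [key]
  -- piece 1
  have h1 : (∑ i : Fin r, k3 / 2 * (x i * coth (x i))) ≤ ∑ i : Fin r, |k3| / 2 * (x i + 1) := by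
    refine Finset.sum_le_sum fun i _ => ?_
    have h0 := mul_coth_nonneg (x i)
    have hle := mul_coth_le (hx i)
    nlinarith [le_abs_self k3, abs_nonneg k3]
  -- piece 2
  have h2 : (∑ i : Fin r, k2 * (x i * coth (2 * x i))) ≤ ∑ i : Fin r, k2 * (x i + 1) := by
    refine Finset.sum_le_sum fun i _ => ?_
    have hle := mul_coth_le (t := 2 * x i) (by linarith [hx i])
    have h0 := mul_coth_nonneg (2 * x i)
    nlinarith
  -- piece 3 : differences
  have hdiag : ∀ i : Fin r, (∑ j ∈ Finset.univ.filter (fun j => j ≠ i),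
      x i * coth (x i - x j)) = ∑ j : Fin r, x i * coth (x i - x j) := by
    intro i
    rw [show (Finset.univ.filter (fun j => j ≠ i)) = Finset.univ.erase i from
      Finset.filter_ne' _ _]
    exact Finset.sum_erase _ (by simp [coth, Real.sinh_zero])
  have hD : (∑ i : Fin r, ∑ j : Fin r, x i * coth (x i - x j)) ≤ E / 2 := by
    have hsym : (∑ i : Fin r, ∑ j : Fin r, x i * coth (x i - x j))
        = ∑ i : Fin r, ∑ j : Fin r, x j * coth (x j - x i) := Finset.sum_comm
    have h2D : 2 * (∑ i : Fin r, ∑ j : Fin r, x i * coth (x i - x j))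
        = ∑ i : Fin r, ∑ j : Fin r, (x i - x j) * coth (x i - x j) := by
      rw [two_mul]
      nth_rewrite 2 [hsym]
      rw [← Finset.sum_add_distrib]
      refine Finset.sum_congr rfl fun i _ => ?_
      rw [← Finset.sum_add_distrib]
      refine Finset.sum_congr rfl fun j _ => ?_
      rw [show x j - x i = -(x i - x j) by ring, coth_neg']
      ring
    have hle : (∑ i : Fin r, ∑ j : Fin r, (x i - x j) * coth (x i - x j)) ≤ E := by
      rw [hE]
      refine Finset.sum_le_sum fun i _ => Finset.sum_le_sum fun j _ => ?_
      have habs : |x i - x j| ≤ x i + x j :=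
        abs_le.mpr ⟨by linarith [hx i, hx j], by linarith [hx i, hx j]⟩
      have := mul_coth_le_abs (x i - x j)
      linarith
    linarith
  have h3 : (∑ i : Fin r, k1 / 2 * (∑ j ∈ Finset.univ.filter (fun j => j ≠ i),
      x i * coth (x i - x j))) ≤ k1 / 2 * (E / 2) := by
    have : (∑ i : Fin r, k1 / 2 * (∑ j ∈ Finset.univ.filter (fun j => j ≠ i),
        x i * coth (x i - x j)))
        = k1 / 2 * (∑ i : Fin r, ∑ j : Fin r, x i * coth (x i - x j)) := by
      rw [Finset.mul_sum]
      exact Finset.sum_congr rfl fun i _ => by rw [hdiag i]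
    rw [this]
    exact mul_le_mul_of_nonneg_left hD (by positivity)
  -- piece 4 : sums
  have h4 : (∑ i : Fin r, k1 / 2 * (∑ j ∈ Finset.univ.filter (fun j => j ≠ i),
      x i * coth (x i + x j))) ≤ k1 / 2 * E := by
    have hP : (∑ i : Fin r, ∑ j ∈ Finset.univ.filter (fun j => j ≠ i),
        x i * coth (x i + x j)) ≤ E := by
      rw [hE]
      refine Finset.sum_le_sum fun i _ => ?_
      calc (∑ j ∈ Finset.univ.filter (fun j => j ≠ i), x i * coth (x i + x j))
          ≤ ∑ j ∈ Finset.univ.filter (fun j => j ≠ i), (x i + x j + 1) := by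
            refine Finset.sum_le_sum fun j _ => ?_
            have hs : 0 < x i + x j := by linarith [hx i, hx j]
            have h1 : x i * coth (x i + x j) ≤ (x i + x j) * coth (x i + x j) :=
              mul_le_mul_of_nonneg_right (by linarith [hx j]) (coth_pos hs).le
            have h2 := mul_coth_le hs
            linarith
        _ ≤ ∑ j : Fin r, (x i + x j + 1) := by
            refine Finset.sum_le_sum_of_subset_of_nonneg (Finset.filter_subset _ _)
              fun j _ _ => by linarith [hx i, hx j]
    calc (∑ i : Fin r, k1 / 2 * (∑ j ∈ Finset.univ.filter (fun j => j ≠ i),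
        x i * coth (x i + x j)))
        = k1 / 2 * (∑ i : Fin r, ∑ j ∈ Finset.univ.filter (fun j => j ≠ i),
            x i * coth (x i + x j)) := (Finset.mul_sum _ _ _).symm
      _ ≤ k1 / 2 * E := mul_le_mul_of_nonneg_left hP (by positivity)
  -- compute E and the linear sums
  have hEval : E = 2 * r * S1 + r ^ 2 := by
    rw [hE]
    simp only [Finset.sum_add_distrib, Finset.sum_const, Finset.card_univ, Fintype.card_fin,
      nsmul_eq_mul]
    rw [← Finset.mul_sum, ← hS1]
    ring
  have hlin : ∀ c : ℝ, (∑ i : Fin r, c * (x i + 1)) = c * (S1 + r) := by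
    intro c
    rw [← Finset.mul_sum]
    congr 1
    simp [Finset.sum_add_distrib, ← hS1, Finset.card_univ]
  have hS1le : S1 ≤ S2 + r := by
    rw [hS1, hS2]
    have : (∑ i : Fin r, x i) ≤ ∑ i : Fin r, ((x i) ^ 2 + 1) :=
      Finset.sum_le_sum fun i _ => by nlinarith [hx i]
    simpa [Finset.sum_add_distrib, Finset.card_univ] using this
  have hS2nn : 0 ≤ S2 := by
    rw [hS2]; exact Finset.sum_nonneg fun i _ => sq_nonneg _
  -- put it all together
  set a : ℝ := |k3| / 2 + k2 + 3 / 2 * k1 * r with ha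
  clear_value a
  have hann : 0 ≤ a := by rw [ha]; positivity
  have hstep : (∑ i : Fin r, k3 / 2 * (x i * coth (x i)))
        + (∑ i : Fin r, k2 * (x i * coth (2 * x i)))
        + (∑ i : Fin r, k1 / 2 * (∑ j ∈ Finset.univ.filter (fun j => j ≠ i),
            x i * coth (x i - x j)))
        + (∑ i : Fin r, k1 / 2 * (∑ j ∈ Finset.univ.filter (fun j => j ≠ i),
            x i * coth (x i + x j)))
      ≤ a * S1 + (|k3| / 2 + k2) * r + 3 / 4 * k1 * r ^ 2 := by
    have e1 := hlin (|k3| / 2)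
    have e2 := hlin k2
    have hB : |k3| / 2 * (S1 + r) + k2 * (S1 + r) + k1 / 2 * (E / 2) + k1 / 2 * E
        = a * S1 + (|k3| / 2 + k2) * r + 3 / 4 * k1 * (r : ℝ) ^ 2 := by
      rw [hEval, ha]; ring
    linarith [h1, h2, h3, h4, e1, e2, hB]
  have hfin1 : a * S1 ≤ a * (S2 + r) := mul_le_mul_of_nonneg_left hS1le hann
  have hsplit : a * (S2 + r) = a * S2 + a * (r : ℝ) := by ring
  have hfin2 : a * S2 ≤ C1 * S2 := by
    refine mul_le_mul_of_nonneg_right ?_ hS2nn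
    rw [ha, hC1]
    nlinarith [mul_nonneg hk1pos.le hrpos.le]
  have hconst : a * (r : ℝ) + (|k3| / 2 + k2) * r + 3 / 4 * k1 * (r : ℝ) ^ 2
      ≤ 2 * r * C1 := by
    rw [ha, hC1]
    nlinarith [mul_nonneg (mul_nonneg hk1pos.le hrpos.le) hrpos.le, hrpos, abs_nonneg k3]
  linarith [hstep, hfin1, hsplit, hfin2, hconst]
end

section
/- Let n ≥ 1 and for x, y ∈ ℂ^n write ⟨x,y⟩ = ∑_{j=1}^n x_j·y_j (the bilinear form) and x̄ for the componentwise complex conjugate of x. Define the triple product {x,y,z} = 2·(⟨x,ȳ⟩·z + ⟨z,ȳ⟩·x − ⟨x,z⟩·ȳ), the operators D(z,w)u = {z,w,u} and Q(z)u = (1/2)·{z,u,z}, and set N(z,z) = 1 − 2·⟨z,z̄⟩ + ⟨z,z⟩·⟨z̄,z̄⟩. Then for all z, w ∈ ℂ^n: w − D(z,z)w + Q(z)Q(z)w = N(z,z)·w + (2·⟨z̄,w⟩·(2·⟨z,z̄⟩ − 1) − 2·⟨z̄,z̄⟩·⟨z,w⟩)·z + (2·⟨z,w⟩ − 2·⟨z,z⟩·⟨z̄,w⟩)·z̄.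 -/
open Finset

/-- The `ℂ`-bilinear form `⟨x,y⟩ = ∑ j, x j * y j` on `ℂ^n`. -/
noncomputable def bform (n : ℕ) (x y : Fin n → ℂ) : ℂ := ∑ j, x j * y j

/-- Componentwise complex conjugation on `ℂ^n`. -/
def cconj (n : ℕ) (x : Fin n → ℂ) : Fin n → ℂ := fun j => starRingEnd ℂ (x j)

/-- The type IV triple product `{x,y,u} = 2(⟨x,ȳ⟩u + ⟨u,ȳ⟩x − ⟨x,u⟩ȳ)`. -/
noncomputable def tripleIV (n : ℕ) (x y u : Fin n → ℂ) : Fin n → ℂ :=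
  (2 : ℂ) • (bform n x (cconj n y) • u + bform n u (cconj n y) • x
    - bform n x u • cconj n y)

/-- `D(z,w)u = {z,w,u}`. -/
noncomputable def DopIV (n : ℕ) (z w u : Fin n → ℂ) : Fin n → ℂ := tripleIV n z w u

/-- `Q(z)u = (1/2){z,u,z}`. -/
noncomputable def QopIV (n : ℕ) (z u : Fin n → ℂ) : Fin n → ℂ :=
  (1 / 2 : ℂ) • tripleIV n z u z

/-- The type IV generic norm `N(z,z) = 1 − 2⟨z,z̄⟩ + ⟨z,z⟩⟨z̄,z̄⟩`. -/
noncomputable def genNormIV (n : ℕ) (z : Fin n → ℂ) : ℂ :=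
  1 - 2 * bform n z (cconj n z) + bform n z z * bform n (cconj n z) (cconj n z)


lemma cconj_cconj (n : ℕ) (x : Fin n → ℂ) : cconj n (cconj n x) = x := by
  funext j; simp [cconj]

lemma bform_conj (n : ℕ) (x y : Fin n → ℂ) :
    starRingEnd ℂ (bform n x y) = bform n (cconj n x) (cconj n y) := by
  simp [bform, cconj, map_sum]

lemma cconj_comb (n : ℕ) (a b : ℂ) (x y : Fin n → ℂ) :
    cconj n (a • x - b • y)
      = starRingEnd ℂ a • cconj n x - starRingEnd ℂ b • cconj n y := by
  funext j; simp [cconj]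

lemma bform_comb (n : ℕ) (a b : ℂ) (x u v : Fin n → ℂ) :
    bform n x (a • u - b • v) = a * bform n x u - b * bform n x v := by
  simp only [bform, Pi.sub_apply, Pi.smul_apply, smul_eq_mul, mul_sub,
    Finset.sum_sub_distrib, Finset.mul_sum]
  congr 1 <;> (apply Finset.sum_congr rfl; intro j _; ring)

lemma QopIV_eq (n : ℕ) (z u : Fin n → ℂ) :
    QopIV n z u = (2 * bform n z (cconj n u)) • z - bform n z z • cconj n u := by
  funext j
  simp only [QopIV, tripleIV, Pi.smul_apply, Pi.add_apply, Pi.sub_apply, smul_eq_mul]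
  ring

theorem bergman_operator_typeIV (n : ℕ) (hn : 1 ≤ n) (z w : Fin n → ℂ) :
    w - DopIV n z z w + QopIV n z (QopIV n z w)
      = genNormIV n z • w
        + (2 * bform n (cconj n z) w * (2 * bform n z (cconj n z) - 1)
            - 2 * bform n (cconj n z) (cconj n z) * bform n z w) • z
        + (2 * bform n z w - 2 * bform n z z * bform n (cconj n z) w) • cconj n z := by
  have b2 : bform n (cconj n z) (cconj n z) = starRingEnd ℂ (bform n z z) := by
    rw [bform_conj]
  have hQ := QopIV_eq n z w
  have hcQ : cconj n (QopIV n z w)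
      = (2 * bform n (cconj n z) w) • cconj n z
        - bform n (cconj n z) (cconj n z) • w := by
    rw [hQ, cconj_comb, cconj_cconj, map_mul, bform_conj, cconj_cconj, b2]
    norm_num [Complex.conj_ofNat]
  have hQQ : QopIV n z (QopIV n z w)
      = (2 * (2 * bform n (cconj n z) w * bform n z (cconj n z)
          - bform n (cconj n z) (cconj n z) * bform n z w)) • z
        - bform n z z • ((2 * bform n (cconj n z) w) • cconj n z
            - bform n (cconj n z) (cconj n z) • w) := by
    rw [QopIV_eq, hcQ, bform_comb]
  funext j
  have := congrFun hQQ j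
  simp only [DopIV, tripleIV, genNormIV, Pi.add_apply, Pi.sub_apply, Pi.smul_apply,
    smul_eq_mul] at this ⊢
  rw [this]
  have hsym : bform n w (cconj n z) = bform n (cconj n z) w := by
    simp [bform]; apply Finset.sum_congr rfl; intro j _; ring
  rw [hsym]
  ring
end
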